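/- arXiv:2507.09405 — 3 statements merged into one kernel-verified Lean document; each statement's English description precedes it below -/
import Mathlib

section
/- Every coefficient of the Geode G is a nonnegative integer; that is, for every finitely supported monomial exponent function m, the coefficient of the corresponding monomial in G lies in the image of ℕ in ℚ. -/
/- `R = MvPowerSeries ℕ ℚ`, with the product (coefficientwise) topology. -/
noncomputable instance : TopologicalSpace (MvPowerSeries ℕ ℚ) :=
  inferInstanceAs (TopologicalSpace ((ℕ →₀ ℕ) → ℚ))

open MvPowerSeries

/-!
Put `A = ∑ₙ tₙ (1 + S + ⋯ + S^(n-1))`. Since `Sⁿ - 1 = (S - 1)(1 + S + ⋯ + S^(n-1))`, the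
equation of `S` becomes `S - 1 = S₁ + (S - 1) A`, so `G S₁ = S₁ + G S₁ A`, and cancelling `S₁`
gives `G = 1 + G A`. Now both `S = 1 + ∑ₙ tₙ Sⁿ` and `G = 1 + ∑ₙ tₙ (G (1 + S + ⋯ + S^(n-1)))`
have the shape `P = 1 + ∑ₙ tₙ Fₙ`, where the coefficients of `Fₙ` of degree `< e` are natural
numbers as soon as those of `P` are. As multiplying by `tₙ` raises the degree, induction on the
degree shows that all coefficients of `S`, and then of `G`, are natural numbers.
-/

namespace MvPowerSeries

open Function
open scoped WithPiTopology

variable {σ ι : Type*}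

section Semiring

variable {R : Type*} [Semiring R]

def coeffsInBelow (T : Subsemiring R) (e : ℕ) : Subsemiring (MvPowerSeries σ R) where
  carrier := {P | ∀ m : σ →₀ ℕ, m.degree < e → coeff m P ∈ T}
  zero_mem' _ _ := by simp
  one_mem' m _ := by
    classical
    rw [coeff_one]
    split_ifs
    exacts [one_mem T, zero_mem T]
  add_mem' hP hQ m hm := by simpa using add_mem (hP m hm) (hQ m hm)
  mul_mem' {P Q} hP hQ m hm := by
    classical
    rw [coeff_mul]
    refine sum_mem fun p hp => mul_mem (hP _ ?_) (hQ _ ?_)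
    all_goals
      rw [Finset.HasAntidiagonal.mem_antidiagonal] at hp
      refine lt_of_le_of_lt (Finsupp.degree_mono ?_) hm
      rw [← hp]
    exacts [le_self_add, le_add_self]

variable {T : Subsemiring R} {e : ℕ}

theorem mem_coeffsInBelow {P : MvPowerSeries σ R} :
    P ∈ coeffsInBelow T e ↔ ∀ m : σ →₀ ℕ, m.degree < e → coeff m P ∈ T :=
  Iff.rfl

theorem coeff_X_mul (s : σ) (P : MvPowerSeries σ R) (m : σ →₀ ℕ) :
    coeff m (X s * P) =
      if Finsupp.single s 1 ≤ m then coeff (m - Finsupp.single s 1) P else 0 := by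
  rw [X, coeff_monomial_mul, one_mul]

theorem coeff_X_mul_eq_zero {s : σ} {m : σ →₀ ℕ} (hs : s ∉ m.support)
    (P : MvPowerSeries σ R) : coeff m (X s * P) = 0 := by
  rw [coeff_X_mul, if_neg (by simpa [Finsupp.single_le_iff] using hs)]

theorem X_mul_mem_coeffsInBelow_succ {P : MvPowerSeries σ R} (hP : P ∈ coeffsInBelow T e)
    (s : σ) : X s * P ∈ coeffsInBelow T (e + 1) := by
  intro m hm
  rw [coeff_X_mul]
  split_ifs with hs
  · refine hP _ ?_
    rw [← tsub_add_cancel_of_le hs, map_add, Finsupp.degree_single] at hm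
    omega
  · exact zero_mem T

variable [TopologicalSpace R] {k : ι → σ}

theorem summable_X_mul (hk : Injective k) (F : ι → MvPowerSeries σ R) :
    Summable fun i => X (k i) * F i := by
  rw [WithPiTopology.summable_iff_summable_coeff]
  intro m
  refine summable_of_hasFiniteSupport <| (m.support.finite_toSet.preimage hk.injOn).subset ?_
  intro i hi
  by_contra hs
  exact hi (coeff_X_mul_eq_zero hs _)

theorem summable_X (hk : Injective k) : Summable fun i => (X (k i) : MvPowerSeries σ R) := by
  simpa using summable_X_mul hk (R := R) 1

theorem tsum_X_ne_zero [T2Space R] [Nontrivial R] [Nonempty ι] (hk : Injective k) :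
    ∑' i, (X (k i) : MvPowerSeries σ R) ≠ 0 := by
  obtain ⟨i⟩ := ‹Nonempty ι›
  classical
  have hsum := WithPiTopology.hasSum_iff_hasSum_coeff.1 (summable_X (R := R) hk).hasSum
    (Finsupp.single (k i) 1)
  have hcoeff : (fun j => coeff (Finsupp.single (k i) 1) (X (k j) : MvPowerSeries σ R)) =
      fun j => if j = i then 1 else 0 := by
    ext j
    simp [coeff_X, Finsupp.single_left_inj one_ne_zero, hk.eq_iff, eq_comm]
  rw [hcoeff] at hsum
  intro h
  rw [h, map_zero] at hsum
  exact one_ne_zero (hsum.unique (hasSum_ite_eq i 1)).symm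

theorem coeff_tsum_X_mul [T2Space R] (hk : Injective k) (F : ι → MvPowerSeries σ R)
    (m : σ →₀ ℕ) : coeff m (∑' i, X (k i) * F i) =
      ∑ i ∈ m.support.preimage k hk.injOn, coeff m (X (k i) * F i) := by
  have hsum := WithPiTopology.hasSum_iff_hasSum_coeff.1 (summable_X_mul hk F).hasSum m
  exact hsum.unique <| hasSum_sum_of_ne_finset_zero fun i hi =>
    coeff_X_mul_eq_zero (by simpa using hi) _

theorem tsum_X_mul_mem_coeffsInBelow [T2Space R] (hk : Injective k)
    {F : ι → MvPowerSeries σ R} (hF : ∀ i, X (k i) * F i ∈ coeffsInBelow T e) :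
    ∑' i, X (k i) * F i ∈ coeffsInBelow T e := fun m hm => by
  rw [coeff_tsum_X_mul hk]
  exact sum_mem fun i _ => hF i m hm

theorem coeff_mem_of_eq_one_add_tsum_X_mul [T2Space R] (hk : Injective k)
    {P : MvPowerSeries σ R} {F : ι → MvPowerSeries σ R} (hP : P = 1 + ∑' i, X (k i) * F i)
    (hF : ∀ e, P ∈ coeffsInBelow T e → ∀ i, F i ∈ coeffsInBelow T e) (m : σ →₀ ℕ) :
    coeff m P ∈ T := by
  have hP_mem (e : ℕ) : P ∈ coeffsInBelow T e := by
    induction e with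
    | zero => exact fun m hm => absurd hm m.degree.not_lt_zero
    | succ e ih =>
      rw [hP]
      exact add_mem (one_mem _) <| tsum_X_mul_mem_coeffsInBelow hk fun i =>
        X_mul_mem_coeffsInBelow_succ (hF e ih i) (k i)
  exact hP_mem _ m m.degree.lt_succ_self

end Semiring

section CommSemiring

variable {R : Type*} [CommSemiring R] [TopologicalSpace R] [IsTopologicalSemiring R] [T2Space R]

theorem mul_tsum_X_mul {k : ι → σ} (hk : Injective k) (P : MvPowerSeries σ R)
    (F : ι → MvPowerSeries σ R) : P * ∑' i, X (k i) * F i = ∑' i, X (k i) * (P * F i) := by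
  simp_rw [mul_left_comm _ P]
  exact ((summable_X_mul hk F).tsum_mul_left P).symm

end CommSemiring

section CommRing

variable {R : Type*} [CommRing R] [TopologicalSpace R] [IsTopologicalSemiring R] [T2Space R]

theorem tsum_X_mul_pow_succ {k : ℕ → σ} (hk : Injective k) (P : MvPowerSeries σ R) :
    ∑' n, X (k n) * P ^ (n + 1) =
      ∑' n, X (k n) + (P - 1) * ∑' n, X (k n) * ∑ j ∈ Finset.range (n + 1), P ^ j := by
  have hA := summable_X_mul hk fun n => ∑ j ∈ Finset.range (n + 1), P ^ j
  rw [← hA.tsum_mul_left, ← (summable_X hk).tsum_add (hA.mul_left (P - 1))]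
  exact tsum_congr fun n => by linear_combination -X (k n) * mul_geom_sum P (n + 1)

end CommRing

end MvPowerSeries

/-- Every coefficient of the Geode `G` is a nonnegative integer: for every finitely
supported monomial exponent function `m`, the coefficient of the corresponding monomial
in `G` lies in the image of `ℕ` in `ℚ`. -/
theorem geode_stmt2 (S G : MvPowerSeries ℕ ℚ)
    (hS : S = 1 + ∑' n : ℕ, (X (n + 1) : MvPowerSeries ℕ ℚ) * S ^ (n + 1))
    (hG : S - 1 = G * ∑' n : ℕ, (X (n + 1) : MvPowerSeries ℕ ℚ)) :
    ∀ m : ℕ →₀ ℕ, coeff m G ∈ Set.range ((↑·) : ℕ → ℚ) := by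
  have hk : Function.Injective (· + 1 : ℕ → ℕ) := add_left_injective 1
  set S₁ : MvPowerSeries ℕ ℚ := ∑' n : ℕ, X (n + 1)
  set F : ℕ → MvPowerSeries ℕ ℚ := fun n => ∑ j ∈ Finset.range (n + 1), S ^ j
  have hS_nat (m : ℕ →₀ ℕ) : coeff m S ∈ (Nat.castRingHom ℚ).rangeS :=
    coeff_mem_of_eq_one_add_tsum_X_mul hk hS (fun _ hSe _ => pow_mem hSe _) m
  -- The lemmas are restated with explicit types so that their sums carry this file's topology
  -- instance instead of `WithPiTopology`'s, which `rw` and `ring` do not identify.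
  have hS_sub : S - 1 = S₁ + (S - 1) * ∑' n, X (n + 1) * F n := by
    have h : ∑' n : ℕ, X (n + 1) * S ^ (n + 1) = S₁ + (S - 1) * ∑' n, X (n + 1) * F n :=
      tsum_X_mul_pow_succ hk S
    nth_rewrite 1 [hS]
    rw [h, add_sub_cancel_left]
  have hG_fix : G = 1 + ∑' n, X (n + 1) * (G * F n) := by
    have h : G * ∑' n, X (n + 1) * F n = ∑' n, X (n + 1) * (G * F n) := mul_tsum_X_mul hk G F
    rw [← h]
    refine mul_right_cancel₀ (b := S₁) (tsum_X_ne_zero hk) ?_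
    rw [hG] at hS_sub
    linear_combination hS_sub
  exact coeff_mem_of_eq_one_add_tsum_X_mul hk hG_fix fun e hGe n =>
    mul_mem hGe <| sum_mem fun j _ => pow_mem (mem_coeffsInBelow.2 fun m _ => hS_nat m) j
end

section
/- (Theorem 3: S counts excursions.) For every finitely supported function m : {1,2,…} → ℕ, the set of excursions with up-step content m is finite, and the coefficient of the monomial ∏_{i≥1} t_i^{m(i)} in S equals the cardinality of this set. -/
open MvPowerSeries

/-- A path is a finite list of integers all of whose entries are ≥ -1; entries ≥ 0 are
up steps and the entry -1 is the down step. -/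
def IsPath (P : List ℤ) : Prop := ∀ s ∈ P, (-1 : ℤ) ≤ s

/-- A nonnegative path: a path all of whose prefix sums are ≥ 0. -/
def NonnegPath (P : List ℤ) : Prop := IsPath P ∧ ∀ i : ℕ, 0 ≤ (P.take i).sum

/-- A positive path: a path all of whose nonempty prefix sums are > 0. -/
def PositivePath (P : List ℤ) : Prop :=
  IsPath P ∧ ∀ i : ℕ, 1 ≤ i → i ≤ P.length → 0 < (P.take i).sum

/-- An excursion: a nonnegative path with total sum 0. -/
def Excursion (P : List ℤ) : Prop := NonnegPath P ∧ P.sum = 0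

/-- The path `P` has up-step content `m` if for every `i ≥ 1` it has exactly `m i`
steps equal to `i - 1`. -/
def HasContent (m : ℕ →₀ ℕ) (P : List ℤ) : Prop :=
  ∀ i : ℕ, 1 ≤ i → P.count ((i : ℤ) - 1) = m i

/-! A nonempty excursion starts with an up step `n` (the variable `t_{n+1}`), after which it is a
path from height `n` down to `0` that never goes below `0`. Such a path from height `k + 1`
splits uniquely, at its first step below its starting height, into an excursion, a down step
and a path from height `k`. Hence the series `T` counting excursions has `T ^ (k + 1)` counting
paths from height `k`, and `T = 1 + ∑ t_{n+1} T ^ (n + 1)`. This equation has only one solution,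
since it expresses each coefficient through coefficients of strictly smaller exponents. -/

open Finsupp Finset.HasAntidiagonal

lemma Finsupp.tsub_single_one_lt {m : ℕ →₀ ℕ} {j : ℕ} (h : m j ≠ 0) : m - single j 1 < m :=
  tsub_le_self.lt_of_ne fun he => by have := congr($he j); simp at this; omega

namespace MvPowerSeries

variable {σ R : Type*} [Semiring R]

lemma coeff_X_mul_of_eq_zero {m : σ →₀ ℕ} {j : σ} (h : m j = 0) (φ : MvPowerSeries σ R) :
    coeff m (X j * φ) = 0 := by
  classical
  rw [X_def, coeff_monomial_mul, if_neg (by simp [single_le_iff, h])]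

lemma coeff_X_mul_of_ne_zero {m : σ →₀ ℕ} {j : σ} (h : m j ≠ 0) (φ : MvPowerSeries σ R) :
    coeff m (X j * φ) = coeff (m - single j 1) φ := by
  classical
  rw [X_def, coeff_monomial_mul, if_pos (single_le_iff.2 (by omega)), one_mul]

lemma coeff_pow_eq_of_coeff_eq {φ ψ : MvPowerSeries σ R} {μ : σ →₀ ℕ}
    (h : ∀ ν ≤ μ, coeff ν φ = coeff ν ψ) (k : ℕ) : coeff μ (φ ^ k) = coeff μ (ψ ^ k) := by
  classical
  induction k generalizing μ with
  | zero => rfl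
  | succ k ih =>
    rw [pow_succ', pow_succ', coeff_mul, coeff_mul]
    refine Finset.sum_congr rfl fun p hp => ?_
    rw [mem_antidiagonal] at hp
    rw [h p.1 (hp ▸ le_self_add :), ih fun ν hν => h ν (hν.trans (hp ▸ le_add_self :))]

end MvPowerSeries

noncomputable def upContent (W : List ℤ) : ℕ →₀ ℕ :=
  (W.map fun s => if 0 ≤ s then single (s.toNat + 1) 1 else 0).sum

@[simp] lemma upContent_append (V W : List ℤ) :
    upContent (V ++ W) = upContent V + upContent W := by
  simp [upContent]

@[simp] lemma upContent_cons_natCast (n : ℕ) (W : List ℤ) :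
    upContent ((n : ℤ) :: W) = single (n + 1) 1 + upContent W := by
  simp [upContent]

@[simp] lemma upContent_cons_neg_one (W : List ℤ) : upContent (-1 :: W) = upContent W := by
  simp [upContent]

lemma upContent_apply_zero (W : List ℤ) : upContent W 0 = 0 := by
  induction W with
  | nil => rfl
  | cons s W ih =>
    simp only [upContent, List.map_cons, List.sum_cons, coe_add, Pi.add_apply] at ih ⊢
    split_ifs <;> simp [ih]

lemma upContent_apply {i : ℕ} (hi : 1 ≤ i) (W : List ℤ) :
    upContent W i = W.count ((i : ℤ) - 1) := by
  induction W with
  | nil => rfl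
  | cons s W ih =>
    simp only [upContent, List.map_cons, List.sum_cons, coe_add, Pi.add_apply,
      List.count_cons] at ih ⊢
    split_ifs <;> simp_all [single_apply] <;> omega

lemma hasContent_iff_upContent_eq {m : ℕ →₀ ℕ} (hm : m 0 = 0) (P : List ℤ) :
    HasContent m P ↔ upContent P = m := by
  refine ⟨fun h => ext fun i => ?_, fun h i hi => h ▸ (upContent_apply hi P).symm⟩
  rcases Nat.eq_zero_or_pos i with rfl | hi
  · rw [upContent_apply_zero, hm]
  · rw [upContent_apply hi, h i hi]

inductive IsDescent : ℕ → List ℤ → Prop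
  | nil : IsDescent 0 []
  | down {k : ℕ} {W : List ℤ} : IsDescent k W → IsDescent (k + 1) (-1 :: W)
  | up {k : ℕ} (n : ℕ) {W : List ℤ} : IsDescent (k + n) W → IsDescent k (n :: W)

namespace IsDescent

lemma nil_iff {k : ℕ} : IsDescent k [] ↔ k = 0 :=
  ⟨fun h => by cases h; rfl, fun h => h ▸ nil⟩

lemma cons_iff {k : ℕ} {s : ℤ} {W : List ℤ} :
    IsDescent k (s :: W) ↔
      (s = -1 ∧ ∃ j, k = j + 1 ∧ IsDescent j W) ∨ ∃ n : ℕ, s = n ∧ IsDescent (k + n) W := by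
  constructor
  · rintro (_ | @⟨j, _, h⟩ | @⟨_, n, _, h⟩)
    · exact Or.inl ⟨rfl, j, rfl, h⟩
    · exact Or.inr ⟨n, rfl, h⟩
  · rintro (⟨rfl, j, rfl, h⟩ | ⟨n, rfl, h⟩)
    · exact h.down
    · exact h.up n

lemma append {a b : ℕ} {V W : List ℤ} (hV : IsDescent a V) (hW : IsDescent b W) :
    IsDescent (a + b) (V ++ W) := by
  induction hV with
  | nil => simpa using hW
  | down _ ih => simpa [add_right_comm] using ih.down
  | up n _ ih => exact up n (by simpa [add_right_comm] using ih)

lemma exists_eq_append_neg_one_cons {a k : ℕ} {W : List ℤ} (h : IsDescent (a + k + 1) W) :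
    ∃ E W', W = E ++ -1 :: W' ∧ IsDescent a E ∧ IsDescent k W' := by
  induction W generalizing a with
  | nil => simp [nil_iff] at h
  | cons s W ih =>
    rcases cons_iff.1 h with ⟨rfl, j, hj, hW⟩ | ⟨n, rfl, hW⟩
    · rcases a with _ | a
      · exact ⟨[], W, rfl, nil, by rwa [show k = j by omega]⟩
      · obtain ⟨E, W', rfl, hE, hW'⟩ := ih (a := a) (by convert hW using 1; omega)
        exact ⟨-1 :: E, W', rfl, hE.down, hW'⟩
    · obtain ⟨E, W', rfl, hE, hW'⟩ := ih (a := a + n) (by convert hW using 1; omega)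
      exact ⟨n :: E, W', rfl, hE.up n, hW'⟩

lemma append_neg_one_cons_inj {a : ℕ} {E E' W W' : List ℤ} (hE : IsDescent a E)
    (hE' : IsDescent a E') (h : E ++ -1 :: W = E' ++ -1 :: W') : E = E' ∧ W = W' := by
  induction hE generalizing E' with
  | nil =>
    cases hE' with
    | nil => simpa using h
    | up n _ => simp at h
  | down _ ih =>
    rcases E' with _ | ⟨s, E'⟩
    · cases hE'
    · rcases cons_iff.1 hE' with ⟨rfl, j, hj, hF⟩ | ⟨n, rfl, _⟩
      · obtain ⟨rfl, rfl⟩ := ih (by simpa [← Nat.succ_inj.1 hj] using hF) (by simpa using h)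
        exact ⟨rfl, rfl⟩
      · simp at h
  | up n _ ih =>
    rcases E' with _ | ⟨s, E'⟩
    · simp at h
    · rcases cons_iff.1 hE' with ⟨rfl, _, _, _⟩ | ⟨n', rfl, hF⟩
      · simp at h
      · simp only [List.cons_append, List.cons.injEq, Nat.cast_inj] at h
        obtain ⟨rfl, h⟩ := h
        obtain ⟨rfl, rfl⟩ := ih hF h
        exact ⟨rfl, rfl⟩

end IsDescent

lemma isPath_cons {s : ℤ} {W : List ℤ} : IsPath (s :: W) ↔ -1 ≤ s ∧ IsPath W :=
  List.forall_mem_cons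

lemma forall_prefix_sum_cons_nonneg_iff (c s : ℤ) (W : List ℤ) :
    (∀ i, 0 ≤ c + ((s :: W).take i).sum) ↔ 0 ≤ c ∧ ∀ i, 0 ≤ c + s + (W.take i).sum := by
  refine ⟨fun h => ⟨by simpa using h 0, fun i => by simpa [add_assoc] using h (i + 1)⟩, ?_⟩
  rintro ⟨h0, h⟩ (_ | i)
  · simpa using h0
  · simpa [add_assoc] using h i

lemma isDescent_iff {k : ℕ} {W : List ℤ} :
    IsDescent k W ↔ IsPath W ∧ (∀ i, 0 ≤ (k : ℤ) + (W.take i).sum) ∧ (k : ℤ) + W.sum = 0 := by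
  induction W generalizing k with
  | nil => simp [IsDescent.nil_iff, IsPath]
  | cons s W ih =>
    simp only [IsDescent.cons_iff, isPath_cons,
      forall_prefix_sum_cons_nonneg_iff, List.sum_cons]
    constructor
    · rintro (⟨rfl, j, rfl, hW⟩ | ⟨n, rfl, hW⟩) <;> obtain ⟨hp, hpre, hsum⟩ := ih.1 hW
      · exact ⟨⟨le_rfl, hp⟩, ⟨by omega, by simpa using hpre⟩, by push_cast at hsum ⊢; omega⟩
      · exact ⟨⟨by omega, hp⟩, ⟨by omega, by simpa using hpre⟩, by push_cast at hsum ⊢; omega⟩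
    · rintro ⟨⟨hs, hp⟩, ⟨hk, hpre⟩, hsum⟩
      have hks : 0 ≤ (k : ℤ) + s := by simpa using hpre 0
      obtain rfl | hs : s = -1 ∨ 0 ≤ s := by omega
      · obtain ⟨j, rfl⟩ : ∃ j, k = j + 1 := ⟨k - 1, by omega⟩
        exact Or.inl ⟨rfl, j, rfl, ih.2 ⟨hp, by simpa using hpre, by push_cast at hsum; omega⟩⟩
      · lift s to ℕ using hs
        exact Or.inr ⟨s, rfl, ih.2 ⟨hp, by simpa using hpre, by push_cast; omega⟩⟩

lemma isDescent_zero_iff_excursion {W : List ℤ} : IsDescent 0 W ↔ Excursion W := by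
  simp [isDescent_iff, Excursion, NonnegPath, and_assoc]

def descents (k : ℕ) (m : ℕ →₀ ℕ) : Set (List ℤ) := {W | IsDescent k W ∧ upContent W = m}

lemma descents_zero_zero : descents 0 0 = {[]} := by
  refine Set.eq_singleton_iff_unique_mem.2 ⟨⟨.nil, rfl⟩, ?_⟩
  rintro (_ | ⟨s, W⟩) ⟨h, hc⟩
  · rfl
  · rcases IsDescent.cons_iff.1 h with ⟨_, j, hj, _⟩ | ⟨n, rfl, _⟩
    · omega
    · simpa using congr($hc (n + 1))

lemma cons_mem_descents_zero {m : ℕ →₀ ℕ} {n : ℕ} {W : List ℤ} (hn : m (n + 1) ≠ 0)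
    (hW : W ∈ descents n (m - single (n + 1) 1)) : (n : ℤ) :: W ∈ descents 0 m :=
  ⟨.up n (by simpa using hW.1), by
    rw [upContent_cons_natCast, hW.2, add_tsub_cancel_of_le (single_le_iff.2 (by omega))]⟩

lemma append_neg_one_cons_mem_descents {a b : ℕ →₀ ℕ} {k : ℕ} {E W : List ℤ}
    (hE : E ∈ descents 0 a) (hW : W ∈ descents k b) : E ++ -1 :: W ∈ descents (k + 1) (a + b) :=
  ⟨by simpa [add_comm] using hE.1.append hW.1.down, by simp [hE.2, hW.2]⟩

noncomputable def upSteps (m : ℕ →₀ ℕ) : Finset ℕ :=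
  m.support.preimage (· + 1) (add_left_injective 1).injOn

lemma mem_upSteps {m : ℕ →₀ ℕ} {n : ℕ} : n ∈ upSteps m ↔ m (n + 1) ≠ 0 := by
  simp [upSteps]

noncomputable def firstStepEquiv {m : ℕ →₀ ℕ} (hm : m ≠ 0) :
    (Σ n : upSteps m, descents n.1 (m - single (n.1 + 1) 1)) ≃ descents 0 m := by
  refine Equiv.ofBijective
    (fun x => ⟨(x.1 : ℤ) :: x.2.1, cons_mem_descents_zero (mem_upSteps.1 x.1.2) x.2.2⟩)
    ⟨?_, ?_⟩
  · rintro ⟨⟨n, _⟩, W, _⟩ ⟨⟨n', _⟩, W', _⟩ h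
    obtain ⟨rfl, rfl⟩ : n = n' ∧ W = W' := by simpa using h
    rfl
  · rintro ⟨_ | ⟨s, W⟩, h, hc⟩
    · exact absurd hc.symm hm
    · rcases IsDescent.cons_iff.1 h with ⟨_, j, hj, _⟩ | ⟨n, rfl, hW⟩
      · omega
      · rw [upContent_cons_natCast] at hc
        have hn : m (n + 1) ≠ 0 := by simp [← hc]
        exact ⟨⟨⟨n, mem_upSteps.2 hn⟩, W, by simpa using hW,
          eq_tsub_of_add_eq ((add_comm _ _).trans hc)⟩, rfl⟩

noncomputable def firstPassageEquiv (k : ℕ) (m : ℕ →₀ ℕ) :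
    (Σ p : antidiagonal m, descents 0 p.1.1 × descents k p.1.2) ≃ descents (k + 1) m := by
  refine Equiv.ofBijective (fun x => ⟨x.2.1.1 ++ -1 :: x.2.2.1,
      by simpa [mem_antidiagonal.1 x.1.2] using append_neg_one_cons_mem_descents x.2.1.2 x.2.2.2⟩)
    ⟨?_, ?_⟩
  · rintro ⟨⟨p, _⟩, ⟨E, hE⟩, ⟨W, hW⟩⟩ ⟨⟨p', _⟩, ⟨E', hE'⟩, ⟨W', hW'⟩⟩ h
    obtain ⟨rfl, rfl⟩ := hE.1.append_neg_one_cons_inj hE'.1 (congrArg Subtype.val h)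
    obtain rfl : p = p' := Prod.ext (hE.2.symm.trans hE'.2) (hW.2.symm.trans hW'.2)
    rfl
  · rintro ⟨W, hW, hc⟩
    obtain ⟨E, W', rfl, hE, hW'⟩ :=
      IsDescent.exists_eq_append_neg_one_cons (a := 0) (by simpa using hW)
    exact ⟨⟨⟨(upContent E, upContent W'), mem_antidiagonal.2 (by simpa using hc)⟩,
      ⟨E, hE, rfl⟩, ⟨W', hW', rfl⟩⟩, rfl⟩

lemma finite_descents (k : ℕ) (m : ℕ →₀ ℕ) : (descents k m).Finite := by
  induction m using WellFoundedLT.induction generalizing k with | _ m ih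
  have finite_of_le : ∀ μ ≤ m, ∀ j, (descents j m).Finite → (descents j μ).Finite :=
    fun μ hμ j hj => hμ.lt_or_eq.elim (fun h => ih μ h j) (fun h => h ▸ hj)
  have h0 : (descents 0 m).Finite := by
    by_cases hm : m = 0
    · simp [hm, descents_zero_zero]
    · have (n : upSteps m) : Finite (descents n.1 (m - single (n.1 + 1) 1)) :=
        (ih _ (tsub_single_one_lt (mem_upSteps.1 n.2)) _).to_subtype
      exact Set.finite_coe_iff.1 (Finite.of_equiv _ (firstStepEquiv hm))
  induction k with
  | zero => exact h0
  | succ k ihk =>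
    have (p : antidiagonal m) : Finite (descents 0 p.1.1 × descents k p.1.2) := by
      have hp := mem_antidiagonal.1 p.2
      have := (finite_of_le p.1.1 (hp ▸ le_self_add :) 0 h0).to_subtype
      have := (finite_of_le p.1.2 (hp ▸ le_add_self :) k ihk).to_subtype
      infer_instance
    exact Set.finite_coe_iff.1 (Finite.of_equiv _ (firstPassageEquiv k m))

lemma card_descents_zero {m : ℕ →₀ ℕ} (hm : m ≠ 0) :
    Nat.card (descents 0 m) = ∑ n ∈ upSteps m, Nat.card (descents n (m - single (n + 1) 1)) := by
  have (j : ℕ) (μ : ℕ →₀ ℕ) : Finite (descents j μ) := (finite_descents j μ).to_subtype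
  rw [← Nat.card_congr (firstStepEquiv hm), Nat.card_sigma, Finset.sum_coe_sort (upSteps m)
    fun n => Nat.card (descents n (m - single (n + 1) 1))]

lemma card_descents_succ (k : ℕ) (m : ℕ →₀ ℕ) :
    Nat.card (descents (k + 1) m) =
      ∑ p ∈ antidiagonal m, Nat.card (descents 0 p.1) * Nat.card (descents k p.2) := by
  have (j : ℕ) (μ : ℕ →₀ ℕ) : Finite (descents j μ) := (finite_descents j μ).to_subtype
  simp_rw [← Nat.card_congr (firstPassageEquiv k m), Nat.card_sigma, Nat.card_prod]
  exact Finset.sum_coe_sort (antidiagonal m)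
    fun p => Nat.card (descents 0 p.1) * Nat.card (descents k p.2)

lemma coeff_tsum_X_mul (f : ℕ → MvPowerSeries ℕ ℚ) (m : ℕ →₀ ℕ) :
    coeff m (∑' n, X (n + 1) * f n) = ∑ n ∈ upSteps m, coeff (m - single (n + 1) 1) (f n) := by
  have hsum : HasSum (fun n => X (n + 1) * f n : ℕ → MvPowerSeries ℕ ℚ)
      fun μ => ∑ n ∈ upSteps μ, coeff μ (X (n + 1) * f n) :=
    Pi.hasSum.2 fun μ => hasSum_sum_of_ne_finset_zero fun n hn =>
      coeff_X_mul_of_eq_zero (by simpa [mem_upSteps] using hn) _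
  have : T2Space (MvPowerSeries ℕ ℚ) := inferInstanceAs (T2Space ((ℕ →₀ ℕ) → ℚ))
  rw [hsum.tsum_eq]
  exact Finset.sum_congr rfl fun n hn => coeff_X_mul_of_ne_zero (mem_upSteps.1 hn) _

lemma eq_of_eq_one_add_tsum {A B : MvPowerSeries ℕ ℚ}
    (hA : A = 1 + ∑' n : ℕ, (X (n + 1) : MvPowerSeries ℕ ℚ) * A ^ (n + 1))
    (hB : B = 1 + ∑' n : ℕ, (X (n + 1) : MvPowerSeries ℕ ℚ) * B ^ (n + 1)) : A = B := by
  ext m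
  induction m using WellFoundedLT.induction with | _ m ih
  rw [hA, hB, map_add, map_add, coeff_tsum_X_mul, coeff_tsum_X_mul]
  congr 1
  exact Finset.sum_congr rfl fun n hn => coeff_pow_eq_of_coeff_eq
    (fun ν hν => ih ν (hν.trans_lt (tsub_single_one_lt (mem_upSteps.1 hn)))) _

noncomputable def excursionSeries : MvPowerSeries ℕ ℚ := fun m => Nat.card (descents 0 m)

lemma coeff_excursionSeries (m : ℕ →₀ ℕ) :
    coeff m excursionSeries = Nat.card (descents 0 m) :=
  rfl

lemma coeff_excursionSeries_pow (k : ℕ) (m : ℕ →₀ ℕ) :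
    coeff m (excursionSeries ^ (k + 1)) = Nat.card (descents k m) := by
  induction k generalizing m with
  | zero => rw [zero_add, pow_one, coeff_excursionSeries]
  | succ k ih =>
    rw [pow_succ', coeff_mul, card_descents_succ]
    push_cast
    exact Finset.sum_congr rfl fun p _ => by rw [ih, coeff_excursionSeries]

lemma excursionSeries_eq :
    excursionSeries =
      1 + ∑' n : ℕ, (X (n + 1) : MvPowerSeries ℕ ℚ) * excursionSeries ^ (n + 1) := by
  ext m
  rw [map_add, coeff_one, coeff_tsum_X_mul]
  simp_rw [coeff_excursionSeries_pow]
  by_cases hm : m = 0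
  · subst hm
    simp [upSteps, coeff_excursionSeries, descents_zero_zero]
  · rw [if_neg hm, zero_add, coeff_excursionSeries, card_descents_zero hm, Nat.cast_sum]

/-- (Theorem 3: `S` counts excursions.) For every finitely supported exponent function
`m` (supported on the variables `t_i`, `i ≥ 1`), the set of excursions with up-step
content `m` is finite, and the coefficient of `∏_{i ≥ 1} t_i ^ (m i)` in `S` is its
cardinality. -/
theorem geode_stmt9 (S : MvPowerSeries ℕ ℚ)
    (hS : S = 1 + ∑' n : ℕ, (X (n + 1) : MvPowerSeries ℕ ℚ) * S ^ (n + 1)) :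
    ∀ m : ℕ →₀ ℕ, m 0 = 0 →
      {P : List ℤ | Excursion P ∧ HasContent m P}.Finite ∧
        coeff m S = (Nat.card {P : List ℤ | Excursion P ∧ HasContent m P} : ℚ) := by
  intro m hm0
  have hset : {P : List ℤ | Excursion P ∧ HasContent m P} = descents 0 m := by
    ext P
    simp only [Set.mem_ofPred_eq, descents, isDescent_zero_iff_excursion,
      hasContent_iff_upContent_eq hm0]
  rw [hset, eq_of_eq_one_add_tsum hS excursionSeries_eq]
  exact ⟨finite_descents 0 m, coeff_excursionSeries m⟩
end

section
/- (Lemma 2.) Let n ≥ 0 and let P be a reverse-positive path whose total sum is −n. Then there exist excursions E_1, …, E_n such that P = E_1 ++ [−1] ++ E_2 ++ [−1] ++ ⋯ ++ E_n ++ [−1] (the empty concatenation, i.e. the empty path, when n = 0), and this factorization is unique; conversely, any path of this form is a reverse-positive path with total sum −n. -/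
/-- A reverse-positive path: a path all of whose nonempty suffix sums are < 0. -/
def RevPositivePath (P : List ℤ) : Prop :=
  IsPath P ∧ ∀ i : ℕ, i < P.length → (P.drop i).sum < 0

/-! Cut a reverse-positive path of total sum `-n` at the first time its running sum becomes
negative. As steps are `≥ -1`, the running sum is then exactly `-1`, so the part before that down
step is an excursion, and the rest is a reverse-positive path of sum `-(n - 1)`. The cut is unique
because an excursion has no prefix of negative sum. Conversely, reverse-positive paths are closed
under concatenation, and `E ++ [-1]` is reverse-positive for every excursion `E`. -/

def joinDown (L : List (List ℤ)) : List ℤ := (L.map (· ++ [-1])).flatten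

@[simp] lemma joinDown_nil : joinDown [] = [] := rfl

@[simp] lemma joinDown_cons (E : List ℤ) (L : List (List ℤ)) :
    joinDown (E :: L) = E ++ -1 :: joinDown L := by
  simp [joinDown]

lemma NonnegPath.sum_nonneg_of_append {A B : List ℤ} (h : NonnegPath (A ++ B)) : 0 ≤ A.sum := by
  simpa [List.take_left'] using h.2 A.length

lemma Excursion.sum_drop_nonpos {E : List ℤ} (hE : Excursion E) (i : ℕ) : (E.drop i).sum ≤ 0 := by
  have := List.sum_take_add_sum_drop E i
  linarith [hE.1.2 i, hE.2]

lemma RevPositivePath.nil : RevPositivePath [] := ⟨by simp [IsPath], by simp⟩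

lemma RevPositivePath.sum_neg {P : List ℤ} (h : RevPositivePath P) (hP : P ≠ []) : P.sum < 0 := by
  simpa using h.2 0 (List.length_pos_iff.2 hP)

lemma RevPositivePath.sum_nonpos {P : List ℤ} (h : RevPositivePath P) : P.sum ≤ 0 := by
  rcases eq_or_ne P [] with rfl | hP
  · simp
  · exact (h.sum_neg hP).le

lemma RevPositivePath.append {A B : List ℤ} (hA : RevPositivePath A) (hB : RevPositivePath B) :
    RevPositivePath (A ++ B) := by
  refine ⟨fun s hs => (List.mem_append.1 hs).elim (hA.1 s) (hB.1 s), fun i hi => ?_⟩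
  rw [List.drop_append, List.sum_append]
  rcases lt_or_ge i A.length with hiA | hiA
  · rw [Nat.sub_eq_zero_of_le hiA.le, List.drop_zero]
    linarith [hA.2 i hiA, hB.sum_nonpos]
  · rw [List.drop_eq_nil_of_le hiA]
    simpa using hB.2 _ (by simp at hi; omega)

lemma RevPositivePath.of_append_right {A B : List ℤ} (h : RevPositivePath (A ++ B)) :
    RevPositivePath B := by
  refine ⟨fun s hs => h.1 s (List.mem_append_right A hs), fun i hi => ?_⟩
  simpa [List.drop_append, List.drop_eq_nil_of_le] using h.2 (A.length + i) (by simp; omega)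

lemma Excursion.revPositivePath_append_neg_one {E : List ℤ} (hE : Excursion E) :
    RevPositivePath (E ++ [-1]) := by
  refine ⟨fun s hs => (List.mem_append.1 hs).elim (hE.1.1 s) (by simp +contextual), fun i hi => ?_⟩
  rw [List.drop_append_of_le_length (by simp at hi; omega), List.sum_append]
  linarith [hE.sum_drop_nonpos i, show [(-1 : ℤ)].sum = -1 from rfl]

lemma RevPositivePath.flatten {L : List (List ℤ)} (hL : ∀ A ∈ L, RevPositivePath A) :
    RevPositivePath L.flatten := by
  induction L with
  | nil => exact RevPositivePath.nil
  | cons A L ih =>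
    simp only [List.mem_cons, forall_eq_or_imp] at hL
    exact hL.1.append (ih hL.2)

lemma revPositivePath_joinDown {L : List (List ℤ)} (hL : ∀ E ∈ L, Excursion E) :
    RevPositivePath (joinDown L) :=
  RevPositivePath.flatten <| by
    simpa using fun E hE => (hL E hE).revPositivePath_append_neg_one

lemma sum_joinDown {L : List (List ℤ)} (hL : ∀ E ∈ L, Excursion E) :
    (joinDown L).sum = -L.length := by
  induction L with
  | nil => simp
  | cons E L ih =>
    simp only [List.mem_cons, forall_eq_or_imp] at hL
    simp [ih hL.2, hL.1.2]

/-- Cut at the first time the running sum becomes negative. -/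
lemma exists_excursion_append_neg_one_cons {P : List ℤ} (hP : IsPath P) {i : ℕ}
    (hi : (P.take i).sum < 0) : ∃ E R, Excursion E ∧ P = E ++ -1 :: R := by
  induction P using List.reverseRecOn generalizing i with
  | nil => simp at hi
  | append_singleton P a ih =>
    have hP' : IsPath P := fun s hs => hP s (List.mem_append_left _ hs)
    by_cases hnonneg : ∀ j, 0 ≤ (P.take j).sum
    · have ha : -1 ≤ a := hP a (by simp)
      have hPsum : 0 ≤ P.sum := by simpa using hnonneg P.length
      rcases le_or_gt i P.length with hiP | hiP
      · exact absurd (hnonneg i) (by simpa [List.take_append_of_le_length hiP] using hi.not_ge)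
      · rw [List.take_of_length_le (by simp; omega), List.sum_append] at hi
        obtain ⟨hP0, rfl⟩ : P.sum = 0 ∧ a = -1 := by simp at hi; omega
        exact ⟨P, [], ⟨⟨hP', hnonneg⟩, hP0⟩, rfl⟩
    · push Not at hnonneg
      obtain ⟨j, hj⟩ := hnonneg
      obtain ⟨E, R, hE, rfl⟩ := ih hP' hj
      exact ⟨E, R ++ [a], hE, by simp⟩

lemma exists_joinDown_eq (n : ℕ) {P : List ℤ} (hP : RevPositivePath P) (hsum : P.sum = -n) :
    ∃ L : List (List ℤ), L.length = n ∧ (∀ E ∈ L, Excursion E) ∧ joinDown L = P := by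
  induction n generalizing P with
  | zero =>
    have hP0 : P = [] := by
      by_contra hne
      exact (hP.sum_neg hne).ne (by simpa using hsum)
    exact ⟨[], by simp [hP0]⟩
  | succ n ih =>
    obtain ⟨E, R, hE, rfl⟩ :=
      exists_excursion_append_neg_one_cons hP.1 (i := P.length) (by simp [hsum]; omega)
    have hR : RevPositivePath R := RevPositivePath.of_append_right (A := E ++ [-1]) (by simpa using hP)
    obtain ⟨L, hlen, hL, rfl⟩ := ih hR (by simp [hE.2] at hsum; omega)
    exact ⟨E :: L, by simp [hlen], by simpa using ⟨hE, hL⟩, joinDown_cons E L⟩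

lemma Excursion.not_nonnegPath_append_neg_one_cons {A : List ℤ} (hA : Excursion A) (R : List ℤ) :
    ¬ NonnegPath (A ++ -1 :: R) := by
  intro h
  have := NonnegPath.sum_nonneg_of_append (A := A ++ [-1]) (B := R) (by simpa using h)
  simp [hA.2] at this

lemma Excursion.append_neg_one_cons_inj {E E' Q Q' : List ℤ} (hE : Excursion E)
    (hE' : Excursion E') (h : E ++ -1 :: Q = E' ++ -1 :: Q') : E = E' ∧ Q = Q' := by
  rcases List.append_eq_append_iff.1 h with ⟨_ | ⟨x, R⟩, rfl, hQ⟩ | ⟨_ | ⟨x, R⟩, rfl, hQ⟩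
  · simpa using hQ
  · obtain ⟨rfl, -⟩ := List.cons_eq_cons.1 hQ
    exact (hE.not_nonnegPath_append_neg_one_cons R hE'.1).elim
  · simpa using hQ.symm
  · obtain ⟨rfl, -⟩ := List.cons_eq_cons.1 hQ
    exact (hE'.not_nonnegPath_append_neg_one_cons R hE.1).elim

lemma eq_of_joinDown_eq {L₁ L₂ : List (List ℤ)} (h₁ : ∀ E ∈ L₁, Excursion E)
    (h₂ : ∀ E ∈ L₂, Excursion E) (h : joinDown L₁ = joinDown L₂) : L₁ = L₂ := by
  induction L₁ generalizing L₂ with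
  | nil => cases L₂ <;> simp_all
  | cons E L₁ ih =>
    cases L₂ with
    | nil => simp at h
    | cons E' L₂ =>
      simp only [List.mem_cons, forall_eq_or_imp] at h₁ h₂
      obtain ⟨rfl, hL⟩ := h₁.1.append_neg_one_cons_inj h₂.1 (by simpa using h)
      rw [ih h₁.2 h₂.2 hL]

/-- (Lemma 2.) For `n ≥ 0`, a path `P` is a reverse-positive path with total sum `-n`
if and only if it can be written, in exactly one way, as
`E₁ ++ [-1] ++ E₂ ++ [-1] ++ ⋯ ++ Eₙ ++ [-1]` with each `Eᵢ` an excursion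
(the empty path when `n = 0`). -/
theorem geode_stmt13 (n : ℕ) (P : List ℤ) :
    (RevPositivePath P ∧ P.sum = -(n : ℤ)) ↔
      ∃! L : List (List ℤ), L.length = n ∧ (∀ E ∈ L, Excursion E) ∧
        (L.map (fun E => E ++ [(-1 : ℤ)])).flatten = P := by
  constructor
  · rintro ⟨hP, hsum⟩
    obtain ⟨L, hlen, hL, rfl⟩ := exists_joinDown_eq n hP hsum
    exact ⟨L, ⟨hlen, hL, rfl⟩, fun L' ⟨_, hL', h⟩ => eq_of_joinDown_eq hL' hL h⟩
  · rintro ⟨L, ⟨rfl, hL, rfl⟩, -⟩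
    exact ⟨revPositivePath_joinDown hL, sum_joinDown hL⟩
end
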